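/- arXiv:1509.05485 — 4 statements merged into one kernel-verified Lean document; each statement's English description precedes it below -/
import Mathlib

section
/- Let K ⊂ ℝⁿ be a convex body and i a positive integer. Let A_i = {u ∈ Sⁿ⁻¹ : there exists x ∈ ∂K with outer unit normal u and K ⊆ B[x − i·u, i]}. Every u ∈ A_i is a regular normal vector of K (i.e., there is a unique x ∈ ∂K with outer unit normal u), and the map τ_i : A_i → ∂K sending u to this unique point is Lipschitz. -/
open MeasureTheory Metric Set Filter
open scoped RealInnerProductSpace ENNReal NNReal Topology

noncomputable section

abbrev Euc (n : ℕ) := EuclideanSpace ℝ (Fin n)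

def IsConvexBody {n : ℕ} (K : Set (Euc n)) : Prop :=
  IsCompact K ∧ Convex ℝ K ∧ (interior K).Nonempty

def IsOuterNormalAt {n : ℕ} (K : Set (Euc n)) (u x : Euc n) : Prop :=
  x ∈ frontier K ∧ ∀ y ∈ K, ⟪y, u⟫ ≤ ⟪x, u⟫

open Classical in
/-- The Gauss map: at a regular boundary point, the unique outer unit normal. -/
def gaussMap {n : ℕ} (K : Set (Euc n)) (x : Euc n) : Euc n :=
  if h : ∃ u, ‖u‖ = 1 ∧ IsOuterNormalAt K u x then h.choose else 0

open Classical in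
/-- The inverse Gauss map: at a regular normal vector, the unique boundary point
with that outer normal. -/
def gaussMapInv {n : ℕ} (K : Set (Euc n)) (u : Euc n) : Euc n :=
  if h : ∃ x, IsOuterNormalAt K u x then h.choose else 0

/-- The (n-1)-th curvature measure: (n-1)-dimensional Hausdorff measure on the boundary. -/
def bdryMeasure (n : ℕ) (K : Set (Euc n)) : Measure (Euc n) :=
  (Measure.hausdorffMeasure ((n : ℝ) - 1)).restrict (frontier K)

/-- The 0-th curvature measure: C₀(K,β) = H^{n-1}(ν(K,β)), realized as the pushforward of
the spherical Hausdorff measure under the inverse Gauss map. -/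
def curv0 (n : ℕ) (K : Set (Euc n)) : Measure (Euc n) :=
  Measure.map (gaussMapInv K)
    ((Measure.hausdorffMeasure ((n : ℝ) - 1)).restrict (Metric.sphere (0 : Euc n) 1))

/-- The generalized Gauss curvature H_K, as density of C₀(K,·) w.r.t. C_{n-1}(K,·). -/
def gaussCurv (n : ℕ) (K : Set (Euc n)) : Euc n → ℝ≥0∞ :=
  Measure.rnDeriv (curv0 n K) (bdryMeasure n K)

/-- The surface area measure S_K, pushforward of boundary Hausdorff measure by the Gauss map. -/
def surfaceMeasure (n : ℕ) (K : Set (Euc n)) : Measure (Euc n) :=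
  Measure.map (gaussMap K) (bdryMeasure n K)

/-- The generalized curvature function F_K, as density of S_K w.r.t. spherical Hausdorff measure. -/
def curvFn (n : ℕ) (K : Set (Euc n)) : Euc n → ℝ≥0∞ :=
  Measure.rnDeriv (surfaceMeasure n K)
    ((Measure.hausdorffMeasure ((n : ℝ) - 1)).restrict (Metric.sphere (0 : Euc n) 1))

/-- The support function of K. -/
def suppFn {n : ℕ} (K : Set (Euc n)) (x : Euc n) : ℝ :=
  sSup ((fun y => ⟪y, x⟫) '' K)


/-! If `K ⊆ B[x - r u, r]` with `‖u‖ = 1`, every `y ∈ K` satisfies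
`‖y - x‖² ≤ 2r⟪x - y, u⟫`. Applied to a second point `y` with the same normal `u` the right side is
`≤ 0`, so `y = x`. Applied symmetrically to `x₁, x₂` with normals `u₁, u₂` and summed, it gives
`‖x₁ - x₂‖² ≤ r⟪x₁ - x₂, u₁ - u₂⟫ ≤ r‖x₁ - x₂‖‖u₁ - u₂‖`, i.e. `τ_i` is `i`-Lipschitz. -/

section InnerProductSpace

variable {E : Type*} [NormedAddCommGroup E] [InnerProductSpace ℝ E]

lemma norm_sub_sq_le_of_mem_closedBall_sub_smul {r : ℝ} {u x y : E} (hu : ‖u‖ = 1)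
    (hy : y ∈ closedBall (x - r • u) r) : ‖y - x‖ ^ 2 ≤ 2 * r * ⟪x - y, u⟫ := by
  rw [mem_closedBall, dist_eq_norm, show y - (x - r • u) = (y - x) + r • u by abel] at hy
  have hsq : ‖(y - x) + r • u‖ ^ 2 ≤ r ^ 2 := pow_le_pow_left₀ (norm_nonneg _) hy 2
  rw [norm_add_sq_real, real_inner_smul_right, norm_smul, hu, Real.norm_eq_abs, mul_one,
    sq_abs] at hsq
  rw [← neg_sub y x, inner_neg_left]
  linarith

lemma eq_of_mem_closedBall_sub_smul_of_inner_le {r : ℝ} {u x y : E} (hu : ‖u‖ = 1)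
    (hy : y ∈ closedBall (x - r • u) r) (hxy : ⟪x, u⟫ ≤ ⟪y, u⟫) : y = x := by
  have hr : 0 ≤ r := dist_nonneg.trans hy
  have hle := norm_sub_sq_le_of_mem_closedBall_sub_smul hu hy
  have hinner : ⟪x - y, u⟫ ≤ 0 := by rw [inner_sub_left]; linarith
  have : ‖y - x‖ ^ 2 ≤ 0 := hle.trans (mul_nonpos_of_nonneg_of_nonpos (by positivity) hinner)
  exact sub_eq_zero.mp (norm_eq_zero.mp (pow_eq_zero_iff two_ne_zero |>.mp
    (le_antisymm this (sq_nonneg _))))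

lemma norm_sub_le_mul_norm_sub_of_mem_closedBall_sub_smul {r : ℝ} {u₁ u₂ x₁ x₂ : E}
    (hu₁ : ‖u₁‖ = 1) (hu₂ : ‖u₂‖ = 1) (h₁ : x₂ ∈ closedBall (x₁ - r • u₁) r)
    (h₂ : x₁ ∈ closedBall (x₂ - r • u₂) r) : ‖x₁ - x₂‖ ≤ r * ‖u₁ - u₂‖ := by
  have hr : 0 ≤ r := dist_nonneg.trans h₁
  have hle₁ := norm_sub_sq_le_of_mem_closedBall_sub_smul hu₁ h₁
  have hle₂ := norm_sub_sq_le_of_mem_closedBall_sub_smul hu₂ h₂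
  rw [norm_sub_rev] at hle₁
  have hsum : ⟪x₁ - x₂, u₁⟫ + ⟪x₂ - x₁, u₂⟫ = ⟪x₁ - x₂, u₁ - u₂⟫ := by
    rw [← neg_sub x₁ x₂, inner_neg_left, inner_sub_right]
    ring
  have hsq : ‖x₁ - x₂‖ ^ 2 ≤ r * ‖u₁ - u₂‖ * ‖x₁ - x₂‖ :=
    calc ‖x₁ - x₂‖ ^ 2 ≤ r * ⟪x₁ - x₂, u₁ - u₂⟫ := by rw [← hsum]; linarith
      _ ≤ r * (‖x₁ - x₂‖ * ‖u₁ - u₂‖) := by gcongr; exact real_inner_le_norm _ _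
      _ = r * ‖u₁ - u₂‖ * ‖x₁ - x₂‖ := by ring
  rcases (norm_nonneg (x₁ - x₂)).eq_or_lt with h0 | h0
  · rw [← h0]; positivity
  · exact le_of_mul_le_mul_right (by rwa [sq] at hsq) h0

end InnerProductSpace

lemma IsOuterNormalAt.eq_of_subset_closedBall {n : ℕ} {K : Set (Euc n)} {r : ℝ} {u x y : Euc n}
    (hK : IsClosed K) (hu : ‖u‖ = 1) (hx : IsOuterNormalAt K u x)
    (hball : K ⊆ closedBall (x - r • u) r) (hy : IsOuterNormalAt K u y) : y = x :=
  eq_of_mem_closedBall_sub_smul_of_inner_le hu (hball (hK.frontier_subset hy.1))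
    (hy.2 x (hK.frontier_subset hx.1))

theorem statement1_general (n : ℕ) (K : Set (Euc n)) (hK : IsConvexBody K)
    (i : ℕ) (Ai : Set (Euc n))
    (hAi : Ai = {u : Euc n | u ∈ Metric.sphere (0 : Euc n) 1 ∧
      ∃ x, IsOuterNormalAt K u x ∧ K ⊆ Metric.closedBall (x - (i : ℝ) • u) i}) :
    (∀ u ∈ Ai, ∃! x, IsOuterNormalAt K u x) ∧
    ∃ C : ℝ, 0 ≤ C ∧ ∀ u₁ ∈ Ai, ∀ u₂ ∈ Ai, ∀ x₁ x₂ : Euc n,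
      IsOuterNormalAt K u₁ x₁ → IsOuterNormalAt K u₂ x₂ →
      ‖x₁ - x₂‖ ≤ C * ‖u₁ - u₂‖ := by
  have hKc : IsClosed K := hK.1.isClosed
  have hmem : ∀ u ∈ Ai, ‖u‖ = 1 ∧ ∃ x₀, IsOuterNormalAt K u x₀ ∧
      K ⊆ closedBall (x₀ - (i : ℝ) • u) i := by
    rintro u hu
    rw [hAi, mem_ofPred_eq, mem_sphere_zero_iff_norm] at hu
    exact hu
  have hball : ∀ u ∈ Ai, ∀ x, IsOuterNormalAt K u x → K ⊆ closedBall (x - (i : ℝ) • u) i := by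
    intro u hu x hx
    obtain ⟨hun, x₀, hx₀, hK₀⟩ := hmem u hu
    rwa [hx₀.eq_of_subset_closedBall hKc hun hK₀ hx]
  refine ⟨fun u hu => ?_, i, i.cast_nonneg, fun u₁ hu₁ u₂ hu₂ x₁ x₂ hx₁ hx₂ => ?_⟩
  · obtain ⟨hun, x₀, hx₀, hK₀⟩ := hmem u hu
    exact ⟨x₀, hx₀, fun y hy => hx₀.eq_of_subset_closedBall hKc hun hK₀ hy⟩
  · exact norm_sub_le_mul_norm_sub_of_mem_closedBall_sub_smul (hmem u₁ hu₁).1 (hmem u₂ hu₂).1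
      (hball u₁ hu₁ x₁ hx₁ (hKc.frontier_subset hx₂.1))
      (hball u₂ hu₂ x₂ hx₂ (hKc.frontier_subset hx₁.1))

theorem statement1 (n : ℕ) (hn : 0 < n) (K : Set (Euc n)) (hK : IsConvexBody K)
    (i : ℕ) (hi : 0 < i) (Ai : Set (Euc n))
    (hAi : Ai = {u : Euc n | u ∈ Metric.sphere (0 : Euc n) 1 ∧
      ∃ x, IsOuterNormalAt K u x ∧ K ⊆ Metric.closedBall (x - (i : ℝ) • u) i}) :
    (∀ u ∈ Ai, ∃! x, IsOuterNormalAt K u x) ∧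
    ∃ C : ℝ, 0 ≤ C ∧ ∀ u₁ ∈ Ai, ∀ u₂ ∈ Ai, ∀ x₁ x₂ : Euc n,
      IsOuterNormalAt K u₁ x₁ → IsOuterNormalAt K u₂ x₂ →
      ‖x₁ - x₂‖ ≤ C * ‖u₁ - u₂‖ :=
  statement1_general n K hK i Ai hAi

end
end

section
/- Let K ⊂ ℝⁿ be a convex body, u₁, u₂ ∈ Sⁿ⁻¹ with angle θ ∈ (0, π/2) between them, and suppose there exist x₁, x₂ ∈ ∂K with outer unit normals u₁, u₂ respectively such that K ⊆ B[x₁ − i·u₁, i] and K ⊆ B[x₂ − i·u₂, i] for some i > 0. Then ‖x₁ − x₂‖ ≤ 2i·sin θ. -/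
open MeasureTheory Metric Set Filter
open scoped RealInnerProductSpace ENNReal NNReal Topology

noncomputable section

theorem statement2 (n : ℕ) (hn : 0 < n) (K : Set (Euc n)) (hK : IsConvexBody K)
    (i : ℝ) (hi : 0 < i) (u₁ u₂ x₁ x₂ : Euc n) (hu₁ : ‖u₁‖ = 1) (hu₂ : ‖u₂‖ = 1)
    (θ : ℝ) (hθ : θ ∈ Set.Ioo 0 (Real.pi / 2)) (hcos : Real.cos θ = ⟪u₁, u₂⟫)
    (hn₁ : IsOuterNormalAt K u₁ x₁) (hn₂ : IsOuterNormalAt K u₂ x₂)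
    (hb₁ : K ⊆ Metric.closedBall (x₁ - i • u₁) i)
    (hb₂ : K ⊆ Metric.closedBall (x₂ - i • u₂) i) :
    ‖x₁ - x₂‖ ≤ 2 * i * Real.sin θ := by
  obtain ⟨hθ0, hθ2⟩ := hθ
  have hKc : IsClosed K := hK.1.isClosed
  have hx₁K : x₁ ∈ K := by
    have := hn₁.1
    rw [frontier, hKc.closure_eq] at this; exact this.1
  have hx₂K : x₂ ∈ K := by
    have := hn₂.1
    rw [frontier, hKc.closure_eq] at this; exact this.1
  set d := x₁ - x₂ with hd
  have h1 : ‖d‖ ^ 2 ≤ 2 * i * ⟪d, u₁⟫ := by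
    have := hb₁ hx₂K
    rw [Metric.mem_closedBall, dist_eq_norm] at this
    have h2 : ‖x₂ - (x₁ - i • u₁)‖ ^ 2 ≤ i ^ 2 := by
      nlinarith [norm_nonneg (x₂ - (x₁ - i • u₁))]
    have hexp : x₂ - (x₁ - i • u₁) = i • u₁ - d := by rw [hd]; abel
    rw [hexp, norm_sub_sq_real, norm_smul, real_inner_smul_left,
      Real.norm_eq_abs, abs_of_pos hi, hu₁, real_inner_comm] at h2
    nlinarith
  have h2 : ‖d‖ ^ 2 ≤ -(2 * i * ⟪d, u₂⟫) := by
    have := hb₂ hx₁K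
    rw [Metric.mem_closedBall, dist_eq_norm] at this
    have h2 : ‖x₁ - (x₂ - i • u₂)‖ ^ 2 ≤ i ^ 2 := by
      nlinarith [norm_nonneg (x₁ - (x₂ - i • u₂))]
    have hexp : x₁ - (x₂ - i • u₂) = d + i • u₂ := by rw [hd]; abel
    rw [hexp, norm_add_sq_real, norm_smul, real_inner_smul_right,
      Real.norm_eq_abs, abs_of_pos hi, hu₂] at h2
    nlinarith
  have hcs : ⟪d, u₁ - u₂⟫ ≤ ‖d‖ * ‖u₁ - u₂‖ := real_inner_le_norm d (u₁ - u₂)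
  have hsum : ‖d‖ ^ 2 ≤ i * ⟪d, u₁ - u₂⟫ := by
    rw [inner_sub_right]; nlinarith
  have hnu : ‖u₁ - u₂‖ ^ 2 = 2 - 2 * Real.cos θ := by
    rw [norm_sub_sq_real, hu₁, hu₂, hcos]; ring
  have hcos0 : 0 ≤ Real.cos θ :=
    Real.cos_nonneg_of_mem_Icc ⟨by linarith [Real.pi_pos], le_of_lt hθ2⟩
  have hcos1 : Real.cos θ ≤ 1 := Real.cos_le_one θ
  have hsin : 0 < Real.sin θ :=
    Real.sin_pos_of_pos_of_lt_pi hθ0 (by linarith [Real.pi_pos])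
  have hsinsq : Real.sin θ ^ 2 = 1 - Real.cos θ ^ 2 := by
    have := Real.sin_sq_add_cos_sq θ; nlinarith
  have hnu2 : ‖u₁ - u₂‖ ≤ 2 * Real.sin θ := by
    have h4 : ‖u₁ - u₂‖ ^ 2 ≤ (2 * Real.sin θ) ^ 2 := by nlinarith
    nlinarith [norm_nonneg (u₁ - u₂)]
  rcases eq_or_lt_of_le (norm_nonneg d) with h0 | h0
  · rw [← h0]; positivity
  · have : ‖d‖ ^ 2 ≤ i * (‖d‖ * (2 * Real.sin θ)) := by
      calc ‖d‖ ^ 2 ≤ i * ⟪d, u₁ - u₂⟫ := hsum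
        _ ≤ i * (‖d‖ * ‖u₁ - u₂‖) := by
            apply mul_le_mul_of_nonneg_left hcs (le_of_lt hi)
        _ ≤ i * (‖d‖ * (2 * Real.sin θ)) := by
            apply mul_le_mul_of_nonneg_left _ (le_of_lt hi)
            exact mul_le_mul_of_nonneg_left hnu2 (norm_nonneg d)
    rw [show i * (‖d‖ * (2 * Real.sin θ)) = 2 * i * Real.sin θ * ‖d‖ from by ring, sq] at this
    exact le_of_mul_le_mul_right this h0

end
end

section
/- Let X be a measurable space with σ-finite measure σ, p, n > 0, and H, w : X → [0,∞) measurable with ∫ H dσ < ∞ and ∫ w dσ < ∞ and w > 0 a.e. Then the infimum over all measurable g : X → ℝ with 0 < g < ∞ and ∫ g^p w dσ < ∞ of (∫_X g^{-n} H dσ)^{p/(n+p)} · (∫_X g^p w dσ)^{n/(n+p)} equals ∫_X H^{p/(n+p)} w^{n/(n+p)} dσ, and the infimum is attained in the limit along g_i = (H/w)^{1/(n+p)} suitably truncated; in particular the infimum is ≥ ∫_X H^{p/(n+p)} w^{n/(n+p)} dσ by Hölder's inequality and ≤ it by choosing g = (H/w)^{1/(n+p)} on {H > 0, w > 0} (with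 truncation). -/
/-!
For every admissible `g` the pointwise product `(g⁻ⁿ H) ^ (p/(n+p)) * (gᵖ w) ^ (n/(n+p))` equals
`H ^ (p/(n+p)) * w ^ (n/(n+p))`, so Hölder's inequality with the weights `p/(n+p)`, `n/(n+p)` gives
the lower bound. Equality in Hölder needs `g⁻ⁿ H = gᵖ w`, i.e. `g = (H / w) ^ (1/(n+p))`; clipping
this from below at `ε > 0` keeps `g` positive, does not increase `∫ g⁻ⁿ H`, and increases
`∫ gᵖ w` by at most `εᵖ ∫ w`, which vanishes as `ε → 0`.
-/

open MeasureTheory Filter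
open scoped ENNReal NNReal Topology

lemma div_add_div_add_eq_one {p n : ℝ} (h : n + p ≠ 0) : p / (n + p) + n / (n + p) = 1 := by
  rw [← add_div, add_comm p n, div_self h]

namespace ENNReal

variable {p n : ℝ}

lemma rpow_neg_mul_rpow_mul_rpow_eq (hp : 0 < p) (hn : 0 < n) {g : ℝ≥0∞} (hg₀ : g ≠ 0)
    (hg : g ≠ ⊤) (h v : ℝ≥0∞) :
    (g ^ (-n) * h) ^ (p / (n + p)) * (g ^ p * v) ^ (n / (n + p)) =
      h ^ (p / (n + p)) * v ^ (n / (n + p)) := by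
  have hnp : n + p ≠ 0 := by positivity
  rw [mul_rpow_of_nonneg _ _ (by positivity), mul_rpow_of_nonneg _ _ (by positivity),
    ← rpow_mul, ← rpow_mul, mul_mul_mul_comm, ← rpow_add _ _ hg₀ hg,
    show -n * (p / (n + p)) + p * (n / (n + p)) = 0 by field_simp; ring, rpow_zero, one_mul]

lemma rpow_add_mul_rpow_mul_rpow (hp : 0 < p) (hn : 0 < n) (a v : ℝ≥0∞) :
    (a ^ (n + p) * v) ^ (p / (n + p)) * v ^ (n / (n + p)) = a ^ p * v := by
  have hnp : n + p ≠ 0 := by positivity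
  rw [mul_rpow_of_nonneg _ _ (by positivity), ← rpow_mul, mul_assoc,
    ← rpow_add_of_nonneg _ _ (by positivity) (by positivity),
    mul_div_cancel₀ _ hnp, div_add_div_add_eq_one hnp, rpow_one]

lemma rpow_neg_mul_rpow_add_mul (hp : 0 < p) (hn : 0 < n) {a : ℝ≥0∞} (ha : a ≠ ⊤)
    (v : ℝ≥0∞) : a ^ (-n) * (a ^ (n + p) * v) = a ^ p * v := by
  rcases eq_or_ne a 0 with rfl | ha₀
  · simp [zero_rpow_of_pos hp, zero_rpow_of_pos (add_pos hn hp)]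
  · rw [← mul_assoc, ← rpow_add _ _ ha₀ ha, neg_add_cancel_left]

lemma tendsto_rpow_mul_add_coe_rpow_mul_rpow_nhds_zero {α β : ℝ} (hα : 0 ≤ α) (hβ : 0 ≤ β)
    (hαβ : α + β = 1) (hp : 0 < p) {I W : ℝ≥0∞} (hI : I ≠ ⊤) (hW : W ≠ ⊤) :
    Tendsto (fun ε : ℝ≥0 => I ^ α * (I + (ε : ℝ≥0∞) ^ p * W) ^ β) (𝓝 0) (𝓝 I) := by
  have hcont : Continuous fun ε : ℝ≥0 => I ^ α * (I + (ε : ℝ≥0∞) ^ p * W) ^ β :=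
    (ENNReal.continuous_const_mul (rpow_ne_top_of_nonneg hα hI)).comp
      (continuous_rpow_const.comp (continuous_const.add
        ((ENNReal.continuous_mul_const hW).comp (continuous_rpow_const.comp continuous_coe))))
  simpa only [coe_zero, zero_rpow_of_pos hp, zero_mul, add_zero, ← rpow_add_of_nonneg _ _ hα hβ,
    hαβ, rpow_one] using hcont.tendsto 0

end ENNReal

section

variable {X : Type*} [MeasurableSpace X] {σ : Measure X} {p n : ℝ} {H w : X → ℝ≥0∞}

lemma lintegral_rpow_mul_rpow_le_of_ne_zero_of_ne_top (hp : 0 < p) (hn : 0 < n)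
    (hH : AEMeasurable H σ) (hw : AEMeasurable w σ) {g : X → ℝ≥0∞} (hg : AEMeasurable g σ)
    (hg_ne : ∀ᵐ x ∂σ, g x ≠ 0 ∧ g x ≠ ⊤) :
    ∫⁻ x, H x ^ (p / (n + p)) * w x ^ (n / (n + p)) ∂σ ≤
      (∫⁻ x, g x ^ (-n) * H x ∂σ) ^ (p / (n + p)) * (∫⁻ x, g x ^ p * w x ∂σ) ^ (n / (n + p)) := by
  have hnp : n + p ≠ 0 := by positivity
  calc ∫⁻ x, H x ^ (p / (n + p)) * w x ^ (n / (n + p)) ∂σ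
      = ∫⁻ x, (g x ^ (-n) * H x) ^ (p / (n + p)) * (g x ^ p * w x) ^ (n / (n + p)) ∂σ := by
        refine lintegral_congr_ae ?_
        filter_upwards [hg_ne] with x ⟨hg₀, hg⟩
        rw [ENNReal.rpow_neg_mul_rpow_mul_rpow_eq hp hn hg₀ hg]
    _ ≤ _ := ENNReal.lintegral_mul_norm_pow_le ((hg.pow_const _).mul hH)
        ((hg.pow_const _).mul hw) (by positivity) (by positivity)
        (div_add_div_add_eq_one hnp)

lemma exists_lintegral_rpow_neg_mul_le_and_lintegral_rpow_mul_le (hp : 0 < p) (hn : 0 < n)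
    (hH : Measurable H) (hw : Measurable w) (hH_ne_top : ∀ᵐ x ∂σ, H x ≠ ⊤)
    (hw_pos : ∀ᵐ x ∂σ, 0 < w x) (hw_ne_top : ∀ᵐ x ∂σ, w x ≠ ⊤) {ε : ℝ≥0} (hε : ε ≠ 0) :
    ∃ g : X → ℝ≥0∞, Measurable g ∧ (∀ x, 0 < g x ∧ g x < ⊤) ∧
      ∫⁻ x, g x ^ (-n) * H x ∂σ ≤ ∫⁻ x, H x ^ (p / (n + p)) * w x ^ (n / (n + p)) ∂σ ∧
      ∫⁻ x, g x ^ p * w x ∂σ ≤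
        ∫⁻ x, H x ^ (p / (n + p)) * w x ^ (n / (n + p)) ∂σ + (ε : ℝ≥0∞) ^ p * ∫⁻ x, w x ∂σ := by
  have hnp : 0 < n + p := add_pos hn hp
  set a : X → ℝ≥0∞ := fun x => (H x / w x) ^ (n + p)⁻¹
  have ha : Measurable a := (hH.div hw).pow_const _
  have hgood : ∀ᵐ x ∂σ, a x ≠ ⊤ ∧ H x = a x ^ (n + p) * w x := by
    filter_upwards [hH_ne_top, hw_pos, hw_ne_top] with x hHx hw₀ hwx
    refine ⟨ENNReal.rpow_ne_top_of_nonneg (by positivity) ?_, ?_⟩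
    · simp [ENNReal.div_eq_top, hHx, hw₀.ne']
    · rw [← ENNReal.rpow_mul, inv_mul_cancel₀ hnp.ne', ENNReal.rpow_one,
        ENNReal.div_mul_cancel hw₀.ne' hwx]
  -- `toNNReal` sends the null set where `a = ⊤` to `0`, so that `g` is finite everywhere.
  refine ⟨fun x => ((a x).toNNReal ⊔ ε : ℝ≥0),
    (ha.ennreal_toNNReal.sup measurable_const).coe_nnreal_ennreal,
    fun x => ⟨ENNReal.coe_pos.2 ((pos_iff_ne_zero.2 hε).trans_le le_sup_right),
      ENNReal.coe_lt_top⟩, lintegral_mono_ae ?_, ?_⟩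
  · filter_upwards [hgood] with x ⟨hax, hHx⟩
    rw [ENNReal.coe_max, ENNReal.coe_toNNReal hax]
    calc max (a x) ε ^ (-n) * H x ≤ a x ^ (-n) * H x := by
          rw [ENNReal.rpow_neg, ENNReal.rpow_neg]
          gcongr
          exact le_max_left _ _
      _ = H x ^ (p / (n + p)) * w x ^ (n / (n + p)) := by
          rw [hHx, ENNReal.rpow_neg_mul_rpow_add_mul hp hn hax,
            ENNReal.rpow_add_mul_rpow_mul_rpow hp hn]
  · calc ∫⁻ x, (((a x).toNNReal ⊔ ε : ℝ≥0) : ℝ≥0∞) ^ p * w x ∂σ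
        ≤ ∫⁻ x, (H x ^ (p / (n + p)) * w x ^ (n / (n + p)) + (ε : ℝ≥0∞) ^ p * w x) ∂σ := by
          refine lintegral_mono_ae ?_
          filter_upwards [hgood] with x ⟨hax, hHx⟩
          rw [ENNReal.coe_max, ENNReal.coe_toNNReal hax, ENNReal.max_rpow hp.le, hHx,
            ENNReal.rpow_add_mul_rpow_mul_rpow hp hn, ← add_mul]
          gcongr
          exact max_le le_self_add le_add_self
      _ = _ := by
          rw [lintegral_add_right _ (hw.const_mul _), lintegral_const_mul _ hw]

end

theorem statement7_general {X : Type*} [MeasurableSpace X] (σ : Measure X)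
    (p n : ℝ) (hp : 0 < p) (hn : 0 < n)
    (H w : X → ℝ≥0∞) (hH : Measurable H) (hw : Measurable w)
    (hHint : ∫⁻ x, H x ∂σ < ⊤) (hwint : ∫⁻ x, w x ∂σ < ⊤)
    (hwpos : ∀ᵐ x ∂σ, 0 < w x) :
    sInf {v : ℝ≥0∞ | ∃ g : X → ℝ≥0∞, Measurable g ∧ (∀ x, 0 < g x ∧ g x < ⊤) ∧
        (∫⁻ x, g x ^ p * w x ∂σ) < ⊤ ∧
        v = (∫⁻ x, g x ^ (-n) * H x ∂σ) ^ (p / (n + p)) *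
            (∫⁻ x, g x ^ p * w x ∂σ) ^ (n / (n + p))} =
      ∫⁻ x, H x ^ (p / (n + p)) * w x ^ (n / (n + p)) ∂σ := by
  set I := ∫⁻ x, H x ^ (p / (n + p)) * w x ^ (n / (n + p)) ∂σ
  have hα : 0 < p / (n + p) := by positivity
  have hβ : 0 < n / (n + p) := by positivity
  have hαβ : p / (n + p) + n / (n + p) = 1 := div_add_div_add_eq_one (by positivity)
  have hI : I ≠ ⊤ := ((ENNReal.lintegral_mul_norm_pow_le hH.aemeasurable hw.aemeasurable
    hα.le hβ.le hαβ).trans_lt (ENNReal.mul_lt_top (ENNReal.rpow_lt_top_of_nonneg hα.le hHint.ne)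
    (ENNReal.rpow_lt_top_of_nonneg hβ.le hwint.ne))).ne
  refine le_antisymm ?_ (le_sInf ?_)
  · have hlim := (ENNReal.tendsto_rpow_mul_add_coe_rpow_mul_rpow_nhds_zero hα.le hβ.le hαβ hp hI
      hwint.ne).mono_left (nhdsWithin_le_nhds (s := Set.Ioi 0))
    refine ge_of_tendsto hlim (eventually_nhdsWithin_of_forall fun ε hε => ?_)
    obtain ⟨g, hg, hg_pos, hgH, hgw⟩ :=
      exists_lintegral_rpow_neg_mul_le_and_lintegral_rpow_mul_le hp hn hH hw
        ((ae_lt_top hH hHint.ne).mono fun x => ne_of_lt) hwpos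
        ((ae_lt_top hw hwint.ne).mono fun x => ne_of_lt) (ne_of_gt hε)
    refine sInf_le_of_le ⟨g, hg, hg_pos, hgw.trans_lt ?_, rfl⟩ (by gcongr)
    exact ENNReal.add_lt_top.2 ⟨hI.lt_top, ENNReal.mul_lt_top
      (ENNReal.rpow_lt_top_of_nonneg hp.le ENNReal.coe_ne_top) hwint⟩
  · rintro _ ⟨g, hg, hg_pos, -, rfl⟩
    exact lintegral_rpow_mul_rpow_le_of_ne_zero_of_ne_top hp hn hH.aemeasurable hw.aemeasurable
      hg.aemeasurable (.of_forall fun x => ⟨(hg_pos x).1.ne', (hg_pos x).2.ne⟩)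

theorem statement7 {X : Type*} [MeasurableSpace X] (σ : Measure X) [SigmaFinite σ]
    (p n : ℝ) (hp : 0 < p) (hn : 0 < n)
    (H w : X → ℝ≥0∞) (hH : Measurable H) (hw : Measurable w)
    (hHint : ∫⁻ x, H x ∂σ < ⊤) (hwint : ∫⁻ x, w x ∂σ < ⊤)
    (hwpos : ∀ᵐ x ∂σ, 0 < w x) (hwfin : ∀ᵐ x ∂σ, w x < ⊤) :
    sInf {v : ℝ≥0∞ | ∃ g : X → ℝ≥0∞, Measurable g ∧ (∀ x, 0 < g x ∧ g x < ⊤) ∧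
        (∫⁻ x, g x ^ p * w x ∂σ) < ⊤ ∧
        v = (∫⁻ x, g x ^ (-n) * H x ∂σ) ^ (p / (n + p)) *
            (∫⁻ x, g x ^ p * w x ∂σ) ^ (n / (n + p))} =
      ∫⁻ x, H x ^ (p / (n + p)) * w x ^ (n / (n + p)) ∂σ :=
  statement7_general σ p n hp hn H w hH hw hHint hwint hwpos
end

section
/- Let K ⊂ ℝⁿ be a convex body, u₀ ∈ Sⁿ⁻¹ a point where the support function h_K is second order differentiable in the generalized sense, and x₀ = τ_K(u₀) = ∇h_K(u₀). Then F_K(u₀) > 0 if and only if there exists r > 0 such that B(x₀ − r·u₀, r) ⊆ K. -/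
/-!
Write `h = h_K`, `x₀ = ∇h(u₀)` and `g v = h v - ⟪x₀, v⟫`, the support function of `K - x₀`.
Since `h` is sublinear, `g` is sublinear, nonnegative and vanishes at `u₀`; its second-order
expansion at `u₀` has Hessian `A`, so `A ≥ 0` and `A u₀ = 0`, and `det (A|u₀^⊥) > 0` iff `A` is
coercive on `u₀^⊥`. Comparing support functions, `B(x₀ - r u₀, r) ⊆ K` iff
`r (‖v‖ - ⟪u₀, v⟫) ≤ g v` for all `v`.

Testing this at `v = u₀ + t w` with `w ⊥ u₀` and letting `t → 0` gives `r ‖w‖² ≤ ⟪A w, w⟫`.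
Conversely, coercivity gives `g v ≥ c ‖v - u₀‖² / 8` on the unit sphere near `u₀`, and `g` has no
other zero on the sphere (a zero `v` would make `A` vanish on `v - u₀`, forcing `v = -u₀`, which
is excluded because `K` has interior points); compactness and homogeneity then produce `r`.
-/

open MeasureTheory Metric Set Filter
open scoped RealInnerProductSpace ENNReal NNReal Topology

noncomputable section

/-- A linear map is symmetric. -/
def IsSymmLin {n : ℕ} (A : Euc n →ₗ[ℝ] Euc n) : Prop := ∀ x y, ⟪A x, y⟫ = ⟪x, A y⟫

open Asymptotics in
/-- Second order differentiability in the generalized (Alexandrov) sense, with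
generalized Hessian A. -/
def HasGenSecondDerivAt {n : ℕ} (f : Euc n → ℝ) (A : Euc n →ₗ[ℝ] Euc n) (u : Euc n) : Prop :=
  DifferentiableAt ℝ f u ∧ IsSymmLin A ∧
  (fun y => f y - f u - fderiv ℝ f u (y - u) - (1 / 2) * ⟪A (y - u), y - u⟫)
    =o[𝓝 u] fun y => ‖y - u‖ ^ 2

/-- The rank-one map z ↦ ⟪z,u⟫ u. -/
def rankOneProj {n : ℕ} (u : Euc n) : Euc n →ₗ[ℝ] Euc n where
  toFun z := ⟪z, u⟫ • u
  map_add' x y := by rw [inner_add_left, add_smul]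
  map_smul' c x := by rw [real_inner_smul_left, mul_smul, RingHom.id_apply]

/-- For A symmetric with A u = 0 (u a unit vector), this computes det (A restricted to u^⊥):
adding the rank-one projection onto u makes the determinant over the whole space equal to the
determinant of the restriction to u^⊥. -/
def detPerp {n : ℕ} (A : Euc n →ₗ[ℝ] Euc n) (u : Euc n) : ℝ :=
  LinearMap.det (A + rankOneProj u)

structure IsSublinear {E : Type*} [AddCommGroup E] [Module ℝ E] (f : E → ℝ) : Prop where
  add_le : ∀ x y, f (x + y) ≤ f x + f y
  smul_of_nonneg : ∀ t : ℝ, 0 ≤ t → ∀ x, f (t • x) = t * f x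

/-- For positively homogeneous `f` this is the first-order Taylor remainder
`f v - f u - f'(u) (v - u)` of `f` at `u`; for `f = h_K` it is the support function of
`K - ∇h_K(u)`. -/
def gapFn {E : Type*} [NormedAddCommGroup E] [NormedSpace ℝ E] (f : E → ℝ) (u v : E) : ℝ :=
  f v - fderiv ℝ f u v

namespace IsSublinear

variable {E : Type*} [NormedAddCommGroup E] [NormedSpace ℝ E] {f : E → ℝ} {u : E}

lemma map_zero (hf : IsSublinear f) : f 0 = 0 := by
  simpa using hf.smul_of_nonneg 0 le_rfl 0

lemma convexOn (hf : IsSublinear f) : ConvexOn ℝ univ f := by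
  refine ⟨convex_univ, fun x _ y _ a b ha hb _ => ?_⟩
  calc f (a • x + b • y) ≤ f (a • x) + f (b • y) := hf.add_le _ _
    _ = a • f x + b • f y := by rw [hf.smul_of_nonneg a ha, hf.smul_of_nonneg b hb]; rfl

lemma continuous [FiniteDimensional ℝ E] (hf : IsSublinear f) : Continuous f :=
  continuousOn_univ.mp (hf.convexOn.continuousOn isOpen_univ)

lemma sub_continuousLinearMap (hf : IsSublinear f) (ℓ : E →L[ℝ] ℝ) :
    IsSublinear fun x => f x - ℓ x where
  add_le x y := by linarith [hf.add_le x y, ℓ.map_add x y]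
  smul_of_nonneg t ht x := by rw [hf.smul_of_nonneg t ht, ℓ.map_smul, smul_eq_mul, mul_sub]

lemma fderiv_apply_self (hf : IsSublinear f) (hd : DifferentiableAt ℝ f u) :
    fderiv ℝ f u u = f u := by
  have hray : HasDerivAt (fun t : ℝ => t • u) u 1 := by
    simpa using (hasDerivAt_id (1 : ℝ)).smul_const u
  have hline : HasDerivAt (fun t : ℝ => f (t • u)) (fderiv ℝ f u u) 1 :=
    hd.hasFDerivAt.comp_hasDerivAt_of_eq 1 hray (one_smul ℝ u).symm
  have hhom : (fun t : ℝ => f (t • u)) =ᶠ[𝓝 1] fun t => t * f u := by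
    filter_upwards [Ioi_mem_nhds zero_lt_one] with t ht
    exact hf.smul_of_nonneg t (le_of_lt ht) u
  exact hline.unique ((hasDerivAt_mul_const (f u)).congr_of_eventuallyEq hhom)

lemma fderiv_le (hf : IsSublinear f) (hd : DifferentiableAt ℝ f u) (v : E) :
    fderiv ℝ f u v ≤ f v := by
  have hray : HasDerivAt (fun t : ℝ => u + t • v) v 0 := by
    simpa using ((hasDerivAt_id (0 : ℝ)).smul_const v).const_add u
  have hline : HasDerivAt (fun t : ℝ => f (u + t • v)) (fderiv ℝ f u v) 0 :=
    hd.hasFDerivAt.comp_hasDerivAt_of_eq 0 hray (by simp)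
  have hconv : ConvexOn ℝ univ fun t : ℝ => f (u + t • v) := by
    simpa [Function.comp_def, AffineMap.lineMap_apply_module', add_comm] using
      hf.convexOn.comp_affineMap (AffineMap.lineMap u (u + v))
  calc fderiv ℝ f u v ≤ slope (fun t : ℝ => f (u + t • v)) 0 1 :=
        hconv.le_slope_of_hasDerivAt (mem_univ 0) (mem_univ 1) zero_lt_one hline
    _ = f (u + v) - f u := by simp [slope_def_field]
    _ ≤ f v := by linarith [hf.add_le u v]

lemma isSublinear_gapFn (hf : IsSublinear f) (u : E) : IsSublinear (gapFn f u) :=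
  hf.sub_continuousLinearMap _

lemma gapFn_nonneg (hf : IsSublinear f) (hd : DifferentiableAt ℝ f u) (v : E) :
    0 ≤ gapFn f u v :=
  sub_nonneg.2 (hf.fderiv_le hd v)

lemma gapFn_self (hf : IsSublinear f) (hd : DifferentiableAt ℝ f u) :
    gapFn f u u = 0 :=
  sub_eq_zero.2 (hf.fderiv_apply_self hd).symm

lemma le_of_forall_norm_eq_one (hf : IsSublinear f) {g : E → ℝ}
    (hg : ∀ t : ℝ, 0 ≤ t → ∀ x, g (t • x) = t * g x) (h : ∀ v, ‖v‖ = 1 → g v ≤ f v) (v : E) :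
    g v ≤ f v := by
  rcases eq_or_ne v 0 with rfl | hv
  · rw [hf.map_zero]
    exact (by simpa using hg 0 le_rfl 0 : g 0 = 0).le
  have hv' : v = ‖v‖ • (‖v‖⁻¹ • v) := by
    rw [smul_smul, mul_inv_cancel₀ (norm_ne_zero_iff.2 hv), one_smul]
  rw [hv', hg _ (norm_nonneg v), hf.smul_of_nonneg _ (norm_nonneg v)]
  exact mul_le_mul_of_nonneg_left (h _ (by simp [norm_smul, hv])) (norm_nonneg v)

end IsSublinear

lemma IsCompact.exists_pos_le {X : Type*} [TopologicalSpace X] {S : Set X} {f : X → ℝ}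
    (hS : IsCompact S) (hf : ContinuousOn f S) (hpos : ∀ x ∈ S, 0 < f x) :
    ∃ m > 0, ∀ x ∈ S, m ≤ f x := by
  rcases S.eq_empty_or_nonempty with rfl | hne
  · exact ⟨1, one_pos, by simp⟩
  obtain ⟨x₀, hx₀, hmin⟩ := hS.exists_isMinOn hne hf
  exact ⟨f x₀, hpos x₀ hx₀, fun x hx => hmin hx⟩

lemma IsCompact.exists_mul_sq_le {E : Type*} [NormedAddCommGroup E] {S : Set E} {f : E → ℝ}
    {p : E} {c δ : ℝ} (hS : IsCompact S) (hf : ContinuousOn f S)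
    (hpos : ∀ x ∈ S, x ≠ p → 0 < f x) (hc : 0 < c) (hδ : 0 < δ)
    (hloc : ∀ x ∈ S, ‖x - p‖ < δ → c * ‖x - p‖ ^ 2 ≤ f x) :
    ∃ r > 0, ∀ x ∈ S, r * ‖x - p‖ ^ 2 ≤ f x := by
  set S' := S ∩ {x | δ ≤ ‖x - p‖}
  have hS' : IsCompact S' :=
    hS.inter_right (isClosed_le continuous_const (continuous_id.sub continuous_const).norm)
  have hdist : ∀ x ∈ S', 0 < ‖x - p‖ ^ 2 := fun x hx => pow_pos (hδ.trans_le hx.2) 2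
  obtain ⟨m, hm, hmS'⟩ := hS'.exists_pos_le (f := fun x => f x / ‖x - p‖ ^ 2)
    ((hf.mono inter_subset_left).div (by fun_prop) fun x hx => (hdist x hx).ne')
    fun x hx => div_pos (hpos x hx.1 fun h => (hdist x hx).ne' (by simp [h])) (hdist x hx)
  refine ⟨min c m, lt_min hc hm, fun x hx => ?_⟩
  by_cases hxδ : ‖x - p‖ < δ
  · exact (mul_le_mul_of_nonneg_right (min_le_left _ _) (sq_nonneg _)).trans (hloc x hx hxδ)
  · have hx' : x ∈ S' := ⟨hx, not_lt.1 hxδ⟩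
    have := (le_div_iff₀ (hdist x hx')).1 (hmS' x hx')
    exact (mul_le_mul_of_nonneg_right (min_le_right _ _) (sq_nonneg _)).trans this

section RealInner

variable {F : Type*} [NormedAddCommGroup F] [InnerProductSpace ℝ F]

lemma inner_eq_one_sub_norm_sub_sq_div_two {u v : F} (hu : ‖u‖ = 1) (hv : ‖v‖ = 1) :
    ⟪u, v⟫ = 1 - ‖v - u‖ ^ 2 / 2 := by
  rw [norm_sub_sq_real, hu, hv, real_inner_comm]; ring

lemma norm_sub_inner_smul_sq {u : F} (hu : ‖u‖ = 1) (v : F) :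
    ‖v - ⟪v, u⟫ • u‖ ^ 2 = ‖v‖ ^ 2 - ⟪v, u⟫ ^ 2 := by
  rw [norm_sub_sq_real, real_inner_smul_right, norm_smul, hu, Real.norm_eq_abs, mul_one, sq_abs]
  ring

lemma inner_sub_inner_smul_self {u : F} (hu : ‖u‖ = 1) (v : F) : ⟪v - ⟪v, u⟫ • u, u⟫ = 0 := by
  rw [inner_sub_left, real_inner_smul_left, real_inner_self_eq_norm_sq, hu]; ring

lemma inner_sub_self_eq_neg_norm_sub_sq_div_two {u v : F} (hu : ‖u‖ = 1) (hv : ‖v‖ = 1) :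
    ⟪v - u, u⟫ = -(‖v - u‖ ^ 2 / 2) := by
  rw [inner_sub_left, real_inner_self_eq_norm_sq, hu, real_inner_comm,
    inner_eq_one_sub_norm_sub_sq_div_two hu hv]
  ring

namespace LinearMap.IsPositive

variable {T : F →ₗ[ℝ] F}

lemma apply_eq_zero_of_inner_eq_zero (hT : T.IsPositive) {x : F} (hx : ⟪T x, x⟫ = 0) :
    T x = 0 := by
  let B : LinearMap.BilinForm ℝ F := (innerₗ F).compl₁₂ T LinearMap.id
  have hCS := B.apply_mul_apply_le_of_forall_zero_le hT.inner_nonneg_left x (T x)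
  simp only [B, compl₁₂_apply, innerₗ_apply_apply, id_apply, hx, zero_mul] at hCS
  rw [hT.isSymmetric (T x) x] at hCS
  exact inner_self_eq_zero.1 (mul_self_eq_zero.1 (le_antisymm hCS (mul_self_nonneg _)))

lemma det_nonneg [FiniteDimensional ℝ F] (hT : T.IsPositive) : 0 ≤ T.det := by
  rw [hT.isSymmetric.det_eq_prod_eigenvalues rfl]
  exact Finset.prod_nonneg fun i _ => hT.nonneg_eigenvalues rfl i

lemma det_pos_iff [FiniteDimensional ℝ F] (hT : T.IsPositive) :
    0 < T.det ↔ ∃ c > 0, ∀ v, c * ‖v‖ ^ 2 ≤ ⟪T v, v⟫ := by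
  rw [hT.det_nonneg.lt_iff_ne', Ne, LinearMap.det_eq_zero_iff_ker_ne_bot, not_not,
    LinearMap.ker_eq_bot']
  constructor
  · intro hinj
    have hquad : Continuous fun v => ⟪T v, v⟫ :=
      T.continuous_of_finiteDimensional.inner continuous_id
    obtain ⟨c, hc, hcS⟩ := (isCompact_sphere (0 : F) 1).exists_pos_le hquad.continuousOn
      fun v hv => (hT.inner_nonneg_left v).lt_of_ne' fun h0 =>
        by simp [hinj v (hT.apply_eq_zero_of_inner_eq_zero h0)] at hv
    refine ⟨c, hc, fun v => ?_⟩
    rcases eq_or_ne v 0 with rfl | hv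
    · simp
    have hunit := hcS (‖v‖⁻¹ • v) (by simp [norm_smul, hv])
    rw [map_smul, real_inner_smul_left, real_inner_smul_right] at hunit
    calc c * ‖v‖ ^ 2 ≤ ‖v‖⁻¹ * (‖v‖⁻¹ * ⟪T v, v⟫) * ‖v‖ ^ 2 := by gcongr
      _ = ⟪T v, v⟫ := by field_simp
  · rintro ⟨c, hc, h⟩ v hv
    have := h v
    rw [hv, inner_zero_left] at this
    by_contra hv0
    linarith [mul_pos hc (pow_pos (norm_pos_iff.2 hv0) 2)]

end LinearMap.IsPositive

lemma mul_norm_sq_sub_inner_sq_le {A : F →ₗ[ℝ] F} {u : F} {c : ℝ} (hA : A.IsSymmetric)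
    (hAu : A u = 0) (hu : ‖u‖ = 1) (hc : ∀ w, ⟪w, u⟫ = 0 → c * ‖w‖ ^ 2 ≤ ⟪A w, w⟫) (d : F) :
    c * (‖d‖ ^ 2 - ⟪d, u⟫ ^ 2) ≤ ⟪A d, d⟫ := by
  have h := hc _ (inner_sub_inner_smul_self hu d)
  rwa [norm_sub_inner_smul_sq hu, map_sub, map_smul, hAu, smul_zero, sub_zero, inner_sub_right,
    real_inner_smul_right, hA d u, hAu, inner_zero_right, mul_zero, sub_zero] at h

lemma tendsto_div_sq_of_isLittleO {φ : F → ℝ} {A : F →ₗ[ℝ] F} {u : F}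
    (h : (fun y => φ y - 1 / 2 * ⟪A (y - u), y - u⟫) =o[𝓝 u] fun y => ‖y - u‖ ^ 2) (v : F) :
    Tendsto (fun t : ℝ => φ (u + t • v) / t ^ 2) (𝓝[≠] 0) (𝓝 (1 / 2 * ⟪A v, v⟫)) := by
  have hline : Tendsto (fun t : ℝ => u + t • v) (𝓝 0) (𝓝 u) :=
    Continuous.tendsto' (by fun_prop) 0 u (by simp)
  have hsq : (fun t : ℝ => ‖u + t • v - u‖ ^ 2) =O[𝓝 0] fun t => t ^ 2 :=
    Asymptotics.IsBigO.of_bound (‖v‖ ^ 2) (Eventually.of_forall fun t => by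
      simp [norm_smul, mul_pow, mul_comm])
  have hrem := ((h.comp_tendsto hline).trans_isBigO hsq).tendsto_div_nhds_zero
  have hlim := (hrem.mono_left (nhdsWithin_le_nhds (s := {0}ᶜ))).add_const (1 / 2 * ⟪A v, v⟫)
  rw [zero_add] at hlim
  refine hlim.congr' ?_
  filter_upwards [self_mem_nhdsWithin] with t (ht : t ≠ 0)
  simp only [Function.comp_apply, add_sub_cancel_left, map_smul, real_inner_smul_left,
    real_inner_smul_right]
  field_simp
  ring

lemma mul_norm_sq_le_inner_of_forall_mul_le {g : F → ℝ} {A : F →ₗ[ℝ] F} {u : F} {r : ℝ}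
    (ho : (fun y => g y - 1 / 2 * ⟪A (y - u), y - u⟫) =o[𝓝 u] fun y => ‖y - u‖ ^ 2)
    (hu : ‖u‖ = 1) (hr : ∀ v, r * (‖v‖ - ⟪u, v⟫) ≤ g v) {w : F} (hw : ⟪w, u⟫ = 0) :
    r * ‖w‖ ^ 2 ≤ ⟪A w, w⟫ := by
  have hnorm : ∀ t : ℝ, ‖u + t • w‖ ^ 2 = 1 + t ^ 2 * ‖w‖ ^ 2 := fun t => by
    rw [norm_add_sq_real, hu, real_inner_smul_right, real_inner_comm, hw, norm_smul,
      Real.norm_eq_abs, mul_pow, sq_abs]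
    ring
  have hlow : ∀ᶠ t in 𝓝[≠] (0 : ℝ),
      r * ‖w‖ ^ 2 / (‖u + t • w‖ + 1) ≤ g (u + t • w) / t ^ 2 := by
    filter_upwards [self_mem_nhdsWithin] with t (ht : t ≠ 0)
    have hr' := hr (u + t • w)
    rw [inner_add_right, real_inner_self_eq_norm_sq, hu, real_inner_smul_right, real_inner_comm,
      hw, one_pow, mul_zero, add_zero] at hr'
    rw [le_div_iff₀ (by positivity), div_mul_eq_mul_div, div_le_iff₀ (by positivity)]
    have hfactor : r * ‖w‖ ^ 2 * t ^ 2 = r * (‖u + t • w‖ - 1) * (‖u + t • w‖ + 1) := by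
      linear_combination (-r) * hnorm t
    rw [hfactor]
    exact mul_le_mul_of_nonneg_right hr' (by positivity)
  have hcont : Tendsto (fun t : ℝ => r * ‖w‖ ^ 2 / (‖u + t • w‖ + 1)) (𝓝[≠] 0)
      (𝓝 (r * ‖w‖ ^ 2 / 2)) := by
    have : Continuous fun t : ℝ => r * ‖w‖ ^ 2 / (‖u + t • w‖ + 1) :=
      continuous_const.div (by fun_prop) fun t => by positivity
    simpa [hu, one_add_one_eq_two] using (this.tendsto 0).mono_left nhdsWithin_le_nhds
  have := le_of_tendsto_of_tendsto hcont (tendsto_div_sq_of_isLittleO ho w) hlow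
  linarith

lemma exists_mul_sq_le_of_isLittleO {g : F → ℝ} {A : F →ₗ[ℝ] F} {u : F} {c : ℝ}
    (ho : (fun y => g y - 1 / 2 * ⟪A (y - u), y - u⟫) =o[𝓝 u] fun y => ‖y - u‖ ^ 2)
    (hu : ‖u‖ = 1) (hc : 0 < c) (hcoer : ∀ d, c * (‖d‖ ^ 2 - ⟪d, u⟫ ^ 2) ≤ ⟪A d, d⟫) :
    ∃ δ > 0, ∀ v, ‖v‖ = 1 → ‖v - u‖ < δ → c / 8 * ‖v - u‖ ^ 2 ≤ g v := by
  obtain ⟨δ, hδ, hball⟩ := Metric.eventually_nhds_iff.1 (ho.def (by positivity : 0 < c / 8))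
  refine ⟨min δ 1, lt_min hδ one_pos, fun v hv hvδ => ?_⟩
  have herr := hball (y := v) (by rw [dist_eq_norm]; exact hvδ.trans_le (min_le_left _ _))
  rw [Real.norm_eq_abs, Real.norm_eq_abs, abs_of_nonneg (sq_nonneg ‖v - u‖)] at herr
  have hd1 : ‖v - u‖ ^ 2 ≤ 1 := pow_le_one₀ (norm_nonneg _) (hvδ.le.trans (min_le_right _ _))
  have hquad := hcoer (v - u)
  rw [inner_sub_self_eq_neg_norm_sub_sq_div_two hu hv] at hquad
  -- `⟪A d, d⟫ ≥ c ‖d‖² (1 - ‖d‖² / 4) ≥ c ‖d‖² / 2`, and the Taylor error is at most `c ‖d‖² / 8`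
  nlinarith [abs_le.1 herr, mul_le_mul_of_nonneg_left hd1 (by positivity : 0 ≤ c * ‖v - u‖ ^ 2)]

end RealInner

section Euclidean

variable {n : ℕ}

lemma isPositive_rankOneProj (u : Euc n) : (rankOneProj u).IsPositive := by
  refine (LinearMap.isPositive_iff _).2 ⟨fun x y => ?_, fun x => ?_⟩
  · simp only [rankOneProj, LinearMap.coe_mk, AddHom.coe_mk, real_inner_smul_left,
      real_inner_smul_right, real_inner_comm u]
    ring
  · simp only [rankOneProj, LinearMap.coe_mk, AddHom.coe_mk, real_inner_smul_left,
      real_inner_comm u]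
    exact mul_self_nonneg _

lemma detPerp_pos_iff {A : Euc n →ₗ[ℝ] Euc n} {u : Euc n} (hA : A.IsPositive) (hu : ‖u‖ = 1)
    (hAu : A u = 0) :
    0 < detPerp A u ↔ ∃ c > 0, ∀ w, ⟪w, u⟫ = 0 → c * ‖w‖ ^ 2 ≤ ⟪A w, w⟫ := by
  have hquad : ∀ v, ⟪(A + rankOneProj u) v, v⟫ = ⟪A v, v⟫ + ⟪v, u⟫ ^ 2 := fun v => by
    simp only [rankOneProj, LinearMap.add_apply, LinearMap.coe_mk, AddHom.coe_mk, inner_add_left,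
      real_inner_smul_left, real_inner_comm u, sq]
  rw [detPerp, (hA.add (isPositive_rankOneProj u)).det_pos_iff]
  simp only [hquad]
  constructor
  · rintro ⟨c, hc, h⟩
    exact ⟨c, hc, fun w hw => by simpa [hw] using h w⟩
  · rintro ⟨c, hc, h⟩
    refine ⟨min c 1, lt_min hc one_pos, fun v => ?_⟩
    have hperp := mul_norm_sq_sub_inner_sq_le hA.isSymmetric hAu hu h v
    have hproj : 0 ≤ ‖v‖ ^ 2 - ⟪v, u⟫ ^ 2 := norm_sub_inner_smul_sq hu v ▸ sq_nonneg _
    nlinarith [mul_le_mul_of_nonneg_right (min_le_left c 1) hproj,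
      mul_le_mul_of_nonneg_right (min_le_right c 1) (sq_nonneg ⟪v, u⟫)]

end Euclidean

section SupportFunction

variable {n : ℕ} {K : Set (Euc n)}

lemma le_suppFn (hK : IsCompact K) {y : Euc n} (hy : y ∈ K) (x : Euc n) : ⟪y, x⟫ ≤ suppFn K x :=
  le_csSup (hK.image (continuous_id.inner continuous_const)).bddAbove ⟨y, hy, rfl⟩

lemma suppFn_le (hne : K.Nonempty) {x : Euc n} {c : ℝ} (h : ∀ y ∈ K, ⟪y, x⟫ ≤ c) :
    suppFn K x ≤ c :=
  csSup_le (hne.image _) (by rintro _ ⟨y, hy, rfl⟩; exact h y hy)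

open scoped Pointwise in
lemma isSublinear_suppFn (hK : IsCompact K) (hne : K.Nonempty) : IsSublinear (suppFn K) where
  add_le x y := suppFn_le hne fun z hz => by
    rw [inner_add_right]
    exact add_le_add (le_suppFn hK hz x) (le_suppFn hK hz y)
  smul_of_nonneg t ht x := by
    have himage : (fun y => ⟪y, t • x⟫) '' K = t • (fun y => ⟪y, x⟫) '' K := by
      rw [← Set.image_smul, Set.image_image]
      simp [real_inner_smul_right]
    rw [suppFn, himage, Real.sSup_smul_of_nonneg ht, smul_eq_mul, suppFn]

lemma mem_of_forall_inner_le_suppFn (hK : IsClosed K) (hconv : Convex ℝ K) (hne : K.Nonempty)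
    {z : Euc n} (hz : ∀ v, ⟪z, v⟫ ≤ suppFn K v) : z ∈ K := by
  by_contra hzK
  obtain ⟨f, s, hfK, hfz⟩ := geometric_hahn_banach_closed_point hconv hK hzK
  set v := (InnerProductSpace.toDual ℝ (Euc n)).symm f
  have hv : ∀ w, ⟪w, v⟫ = f w := fun w => by
    rw [real_inner_comm, InnerProductSpace.toDual_symm_apply]
  have hle : suppFn K v ≤ s := suppFn_le hne fun y hy => (hv y).symm ▸ (hfK y hy).le
  linarith [hz v, hv z]

lemma ball_subset_iff_forall_inner_add_le_suppFn (hK : IsCompact K) (hconv : Convex ℝ K)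
    (hne : K.Nonempty) {c : Euc n} {r : ℝ} (hr : 0 < r) :
    ball c r ⊆ K ↔ ∀ v, ⟪c, v⟫ + r * ‖v‖ ≤ suppFn K v := by
  constructor
  · intro hsub v
    have hclosed : closedBall c r ⊆ K :=
      closure_ball c hr.ne' ▸ closure_minimal hsub hK.isClosed
    rcases eq_or_ne v 0 with rfl | hv
    · simpa using le_suppFn hK (hclosed (mem_closedBall_self hr.le)) 0
    have hnv : 0 < ‖v‖ := norm_pos_iff.2 hv
    have hmem : c + (r / ‖v‖) • v ∈ K := hclosed <| by
      rw [mem_closedBall_iff_norm, add_sub_cancel_left, norm_smul, Real.norm_eq_abs,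
        abs_of_pos (div_pos hr hnv), div_mul_cancel₀ _ hnv.ne']
    have := le_suppFn hK hmem v
    rwa [inner_add_left, real_inner_smul_left, real_inner_self_eq_norm_sq, sq, ← mul_assoc,
      div_mul_cancel₀ _ hnv.ne'] at this
  · intro h y hy
    refine mem_of_forall_inner_le_suppFn hK.isClosed hconv hne fun v => ?_
    have hdist : ⟪y - c, v⟫ ≤ r * ‖v‖ := (real_inner_le_norm _ _).trans
      (mul_le_mul_of_nonneg_right (mem_ball_iff_norm.1 hy).le (norm_nonneg v))
    have := h v
    rw [inner_sub_left] at hdist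
    linarith

lemma suppFn_add_suppFn_neg_pos (hK : IsCompact K) (hint : (interior K).Nonempty) {u : Euc n}
    (hu : u ≠ 0) : 0 < suppFn K u + suppFn K (-u) := by
  obtain ⟨z, hz⟩ := hint
  obtain ⟨ε, hε, hball⟩ := Metric.isOpen_iff.1 isOpen_interior z hz
  have hnu : 0 < ‖u‖ := norm_pos_iff.2 hu
  set s := ε / (2 * ‖u‖)
  have hs : 0 < s := by positivity
  have hmem : ∀ w : Euc n, ‖w‖ = s * ‖u‖ → z + w ∈ K := fun w hw => interior_subset <| hball <| by
    rw [mem_ball_iff_norm, add_sub_cancel_left, hw]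
    calc s * ‖u‖ = ε / 2 := by simp only [s]; field_simp
      _ < ε := half_lt_self hε
  have h₁ := le_suppFn hK (hmem (s • u) (by simp [norm_smul, hs.le])) u
  have h₂ := le_suppFn hK (hmem (-(s • u)) (by simp [norm_smul, hs.le])) (-u)
  simp only [inner_add_left, inner_neg_left, inner_neg_right, real_inner_smul_left,
    real_inner_self_eq_norm_sq] at h₁ h₂
  nlinarith [mul_pos hs (pow_pos hnu 2)]

end SupportFunction

section GenSecondDeriv

variable {n : ℕ} {f : Euc n → ℝ} {A : Euc n →ₗ[ℝ] Euc n} {u : Euc n}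

lemma HasGenSecondDerivAt.isLittleO_gapFn (hf : IsSublinear f) (hA : HasGenSecondDerivAt f A u) :
    (fun y => gapFn f u y - 1 / 2 * ⟪A (y - u), y - u⟫) =o[𝓝 u] fun y => ‖y - u‖ ^ 2 := by
  refine hA.2.2.congr_left fun y => ?_
  rw [map_sub, hf.fderiv_apply_self hA.1, gapFn]
  ring

lemma HasGenSecondDerivAt.isPositive (hf : IsSublinear f) (hA : HasGenSecondDerivAt f A u) :
    A.IsPositive := by
  refine (LinearMap.isPositive_iff A).2 ⟨hA.2.1, fun v => ?_⟩
  have := ge_of_tendsto (tendsto_div_sq_of_isLittleO (hA.isLittleO_gapFn hf) v)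
    (Eventually.of_forall fun t => div_nonneg (hf.gapFn_nonneg hA.1 _) (sq_nonneg t))
  linarith

lemma HasGenSecondDerivAt.apply_self_eq_zero (hf : IsSublinear f)
    (hA : HasGenSecondDerivAt f A u) : A u = 0 := by
  refine (hA.isPositive hf).apply_eq_zero_of_inner_eq_zero ?_
  have hzero : ∀ᶠ t in 𝓝[≠] (0 : ℝ), 0 = gapFn f u (u + t • u) / t ^ 2 := by
    filter_upwards [mem_nhdsWithin_of_mem_nhds (Ioi_mem_nhds neg_one_lt_zero)] with t ht
    have hray : u + t • u = (1 + t) • u := by rw [add_smul, one_smul]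
    rw [hray, (hf.isSublinear_gapFn u).smul_of_nonneg _ (by linarith [mem_Ioi.1 ht]),
      hf.gapFn_self hA.1, mul_zero, zero_div]
  have := tendsto_nhds_unique (tendsto_div_sq_of_isLittleO (hA.isLittleO_gapFn hf) u)
    (tendsto_const_nhds.congr' hzero)
  linarith

end GenSecondDeriv

section ConvexBody

variable {n : ℕ} {K : Set (Euc n)} {u : Euc n} {A : Euc n →ₗ[ℝ] Euc n}

lemma ball_gradient_sub_subset_iff (hK : IsConvexBody K) {r : ℝ} (hr : 0 < r) :
    ball (gradient (suppFn K) u - r • u) r ⊆ K ↔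
      ∀ v, r * (‖v‖ - ⟪u, v⟫) ≤ gapFn (suppFn K) u v := by
  rw [ball_subset_iff_forall_inner_add_le_suppFn hK.1 hK.2.1 (hK.2.2.mono interior_subset) hr]
  refine forall_congr' fun v => ?_
  rw [inner_sub_left, inner_gradient_left, real_inner_smul_left, gapFn]
  constructor <;> intro h <;> linarith

lemma gapFn_suppFn_pos (hK : IsConvexBody K) (hu : ‖u‖ = 1)
    (hA : HasGenSecondDerivAt (suppFn K) A u) {c : ℝ} (hc : 0 < c)
    (hcoer : ∀ d, c * (‖d‖ ^ 2 - ⟪d, u⟫ ^ 2) ≤ ⟪A d, d⟫) {v : Euc n} (hv : ‖v‖ = 1)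
    (hvu : v ≠ u) : 0 < gapFn (suppFn K) u v := by
  have hh := isSublinear_suppFn hK.1 (hK.2.2.mono interior_subset)
  have hg := hh.isSublinear_gapFn u
  have hg0 := hh.gapFn_nonneg hA.1
  refine (hg0 v).lt_of_ne' fun hgv => ?_
  have hseg : ∀ᶠ t in 𝓝[>] (0 : ℝ), 0 = gapFn (suppFn K) u (u + t • (v - u)) / t ^ 2 := by
    filter_upwards [Ioo_mem_nhdsGT one_pos] with t ht
    have hconv := hg.convexOn.2 (mem_univ u) (mem_univ v) (sub_nonneg.2 ht.2.le) ht.1.le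
      (sub_add_cancel 1 t)
    rw [hh.gapFn_self hA.1, hgv, smul_zero, smul_zero, add_zero] at hconv
    rw [show u + t • (v - u) = (1 - t) • u + t • v by module, le_antisymm hconv (hg0 _),
      zero_div]
  have hAd : ⟪A (v - u), v - u⟫ = 0 := by
    have hlim := (tendsto_div_sq_of_isLittleO (hA.isLittleO_gapFn hh) (v - u)).mono_left
      (nhdsGT_le_nhdsNE 0)
    have := tendsto_nhds_unique hlim (tendsto_const_nhds.congr' hseg)
    linarith
  have hquad := hcoer (v - u)
  rw [hAd, inner_sub_self_eq_neg_norm_sub_sq_div_two hu hv] at hquad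
  have hd4 : 4 ≤ ‖v - u‖ ^ 2 := by
    nlinarith [mul_pos hc (pow_pos (norm_pos_iff.2 (sub_ne_zero.2 hvu)) 2)]
  have hvneg : v = -u := by
    refine eq_neg_of_add_eq_zero_left (norm_eq_zero.1 (pow_eq_zero_iff two_ne_zero |>.1 ?_))
    refine le_antisymm ?_ (sq_nonneg _)
    rw [norm_add_sq_real, hu, hv, real_inner_comm, inner_eq_one_sub_norm_sub_sq_div_two hu hv]
    linarith
  have hu0 : u ≠ 0 := by rintro rfl; simp at hu
  have hwidth := suppFn_add_suppFn_neg_pos hK.1 hK.2.2 hu0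
  rw [hvneg, gapFn, map_neg, hh.fderiv_apply_self hA.1] at hgv
  linarith

lemma exists_forall_mul_le_gapFn_suppFn (hK : IsConvexBody K) (hu : ‖u‖ = 1)
    (hA : HasGenSecondDerivAt (suppFn K) A u) {c : ℝ} (hc : 0 < c)
    (hcoer : ∀ w, ⟪w, u⟫ = 0 → c * ‖w‖ ^ 2 ≤ ⟪A w, w⟫) :
    ∃ r > 0, ∀ v, r * (‖v‖ - ⟪u, v⟫) ≤ gapFn (suppFn K) u v := by
  have hh := isSublinear_suppFn hK.1 (hK.2.2.mono interior_subset)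
  have hg := hh.isSublinear_gapFn u
  have hcoer' := mul_norm_sq_sub_inner_sq_le (hA.isPositive hh).isSymmetric
    (hA.apply_self_eq_zero hh) hu hcoer
  obtain ⟨δ, hδ, hloc⟩ := exists_mul_sq_le_of_isLittleO (hA.isLittleO_gapFn hh) hu hc hcoer'
  obtain ⟨r, hr, hsphere⟩ := (isCompact_sphere (0 : Euc n) 1).exists_mul_sq_le (p := u)
    hg.continuous.continuousOn
    (fun v hv hvu => gapFn_suppFn_pos hK hu hA hc hcoer' (mem_sphere_zero_iff_norm.1 hv) hvu)
    (by positivity : 0 < c / 8) hδ (fun v hv => hloc v (mem_sphere_zero_iff_norm.1 hv))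
  refine ⟨2 * r, by positivity, hg.le_of_forall_norm_eq_one (fun t ht x => ?_) fun v hv => ?_⟩
  · rw [norm_smul, real_inner_smul_right, Real.norm_eq_abs, abs_of_nonneg ht]
    ring
  · have := hsphere v (mem_sphere_zero_iff_norm.2 hv)
    rw [hv, inner_eq_one_sub_norm_sub_sq_div_two hu hv]
    linarith

end ConvexBody

theorem statement17_general (n : ℕ) (K : Set (Euc n)) (hK : IsConvexBody K)
    (u₀ : Euc n) (hu₀ : ‖u₀‖ = 1) (A : Euc n →ₗ[ℝ] Euc n)
    (hA : HasGenSecondDerivAt (suppFn K) A u₀) :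
    0 < detPerp A u₀ ↔
      ∃ r > (0 : ℝ), Metric.ball (gradient (suppFn K) u₀ - r • u₀) r ⊆ K := by
  have hh := isSublinear_suppFn hK.1 (hK.2.2.mono interior_subset)
  rw [detPerp_pos_iff (hA.isPositive hh) hu₀ (hA.apply_self_eq_zero hh)]
  constructor
  · rintro ⟨c, hc, hcoer⟩
    obtain ⟨r, hr, hgap⟩ := exists_forall_mul_le_gapFn_suppFn hK hu₀ hA hc hcoer
    exact ⟨r, hr, (ball_gradient_sub_subset_iff hK hr).2 hgap⟩
  · rintro ⟨r, hr, hball⟩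
    exact ⟨r, hr, fun w hw => mul_norm_sq_le_inner_of_forall_mul_le (hA.isLittleO_gapFn hh) hu₀
      ((ball_gradient_sub_subset_iff hK hr).1 hball) hw⟩

theorem statement17 (n : ℕ) (hn : 0 < n) (K : Set (Euc n)) (hK : IsConvexBody K)
    (u₀ : Euc n) (hu₀ : ‖u₀‖ = 1) (A : Euc n →ₗ[ℝ] Euc n)
    (hA : HasGenSecondDerivAt (suppFn K) A u₀) :
    0 < detPerp A u₀ ↔
      ∃ r > (0 : ℝ), Metric.ball (gradient (suppFn K) u₀ - r • u₀) r ⊆ K :=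
  statement17_general n K hK u₀ hu₀ A hA
end
end
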